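/- arXiv:1507.00395 — 4 statements merged into one kernel-verified Lean document; each statement's English description precedes it below -/
import Mathlib

section
/- Let k be a field, let V₀, V₁, V₂ be finite-dimensional k-vector spaces, let f : V₀ → V₁ be an injective k-linear map and g : V₁ → V₂ a bijective k-linear map, and let e₀ ≤ e₁ ≤ e₂ be natural numbers. Then there is a bijection between: (1) the set of triples (U₀, U₁, U₂) of subspaces Uᵢ ≤ Vᵢ with dim Uᵢ = eᵢ for i = 0,1,2, f(U₀) ⊆ U₁ and g(U₁) ⊆ U₂; and (2) the product of the set of pairs (U₀, U₂) of subspaces U₀ ≤ V₀, U₂ ≤ V₂ with dim U₀ = e₀, dim U₂ = e₂ and (g ∘ f)(U₀) ⊆ U₂, with the set of (e₁ − e₀)-dimensional subspaces of k^{e₂ − e₀}. -/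
/-!
Sending a chain `(U₀, U₁, U₂)` to `(U₀, U₂)`, the fibre over a compatible pair is the set of
`e₁`-dimensional `U₁` with `f U₀ ≤ U₁ ≤ g⁻¹ U₂`. As `f` is injective and `g` bijective, these
bounds have dimensions `e₀` and `e₂`, so by the correspondence theorem the fibre is the
Grassmannian of `(e₁ - e₀)`-dimensional subspaces of `g⁻¹ U₂ / f U₀ ≅ k^(e₂ - e₀)`.
-/

open Module

namespace Submodule

variable {k V : Type*} [Field k] [AddCommGroup V] [Module k V]

theorem finrank_comap_mkQ [FiniteDimensional k V] (p : Submodule k V)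
    (Z : Submodule k (V ⧸ p)) :
    finrank k (Z.comap p.mkQ) = finrank k Z + finrank k p := by
  have h := (p.mkQ.domRestrict (Z.comap p.mkQ)).finrank_range_add_finrank_ker
  rwa [LinearMap.range_domRestrict, map_comap_eq_of_surjective p.mkQ_surjective,
    LinearMap.ker_domRestrict, ker_mkQ,
    (comapSubtypeEquivOfLe (le_comap_mkQ p Z)).finrank_eq, eq_comm] at h

noncomputable def finrankEqAboveEquivQuotient [FiniteDimensional k V] (p : Submodule k V)
    (d : ℕ) :
    {U : Submodule k V // finrank k U = d + finrank k p ∧ p ≤ U} ≃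
      {Z : Submodule k (V ⧸ p) // finrank k Z = d} where
  toFun U := ⟨U.1.map p.mkQ, by
    have h := p.finrank_comap_mkQ (U.1.map p.mkQ)
    rw [comap_map_mkQ, sup_eq_right.mpr U.2.2, U.2.1] at h
    omega⟩
  invFun Z := ⟨Z.1.comap p.mkQ, by rw [finrank_comap_mkQ, Z.2], le_comap_mkQ p Z⟩
  left_inv U := Subtype.ext <| by simp only [comap_map_mkQ, sup_eq_right.mpr U.2.2]
  right_inv Z := Subtype.ext <| map_comap_eq_of_surjective p.mkQ_surjective Z

noncomputable def finrankEqBetweenEquiv (F W : Submodule k V) (hFW : F ≤ W) (d : ℕ) :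
    {U : Submodule k V // finrank k U = d ∧ F ≤ U ∧ U ≤ W} ≃
      {U : Submodule k W // finrank k U = d ∧ F.comap W.subtype ≤ U} where
  toFun U := ⟨U.1.comap W.subtype, by
    rw [← finrank_map_subtype_eq, map_comap_subtype, inf_eq_right.mpr U.2.2.2, U.2.1],
    comap_mono U.2.2.1⟩
  invFun U := ⟨U.1.map W.subtype, by rw [finrank_map_subtype_eq, U.2.1], by
    simpa only [map_comap_subtype, inf_eq_right.mpr hFW] using map_mono (f := W.subtype) U.2.2,
    map_subtype_le W U⟩
  left_inv U := Subtype.ext <| by simp only [map_comap_subtype, inf_eq_right.mpr U.2.2.2]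
  right_inv U := Subtype.ext <| comap_map_eq_of_injective W.injective_subtype U

end Submodule

def LinearEquiv.finrankEqSubmoduleCongr {k X Y : Type*} [Field k] [AddCommGroup X] [Module k X]
    [AddCommGroup Y] [Module k Y] (e : X ≃ₗ[k] Y) (d : ℕ) :
    {Z : Submodule k X // finrank k Z = d} ≃ {Z : Submodule k Y // finrank k Z = d} :=
  (Submodule.orderIsoMapComap e).toEquiv.subtypeEquiv fun Z => by
    rw [← e.finrank_map_eq Z]
    rfl

section

variable {k V₀ V₁ V₂ : Type*} [Field k] [AddCommGroup V₀] [Module k V₀]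
  [AddCommGroup V₁] [Module k V₁] [AddCommGroup V₂] [Module k V₂]

theorem Submodule.nonempty_finrankEqBetween_equiv_fin (F W : Submodule k V₁)
    [FiniteDimensional k W] (hFW : F ≤ W) {e₀ e₁ e₂ : ℕ} (hF : finrank k F = e₀)
    (hW : finrank k W = e₂) (h01 : e₀ ≤ e₁) :
    Nonempty ({U : Submodule k V₁ // finrank k U = e₁ ∧ F ≤ U ∧ U ≤ W} ≃
      {Z : Submodule k (Fin (e₂ - e₀) → k) // finrank k Z = e₁ - e₀}) := by
  set F' := F.comap W.subtype
  have hF' : finrank k F' = e₀ := by rw [(comapSubtypeEquivOfLe hFW).finrank_eq, hF]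
  have hQ : finrank k (W ⧸ F') = e₂ - e₀ := by
    have := F'.finrank_quotient_add_finrank
    omega
  obtain ⟨eQ⟩ : Nonempty ((W ⧸ F') ≃ₗ[k] (Fin (e₂ - e₀) → k)) :=
    FiniteDimensional.nonempty_linearEquiv_of_finrank_eq (by rw [hQ, finrank_fin_fun])
  exact ⟨(F.finrankEqBetweenEquiv W hFW e₁).trans <|
    (Equiv.subtypeEquivRight fun U => by rw [hF', Nat.sub_add_cancel h01]).trans <|
    (F'.finrankEqAboveEquivQuotient (e₁ - e₀)).trans (eQ.finrankEqSubmoduleCongr _)⟩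

def chainEquivSigma (f : V₀ →ₗ[k] V₁) (g : V₁ →ₗ[k] V₂) (e₀ e₁ e₂ : ℕ) :
    {U : Submodule k V₀ × Submodule k V₁ × Submodule k V₂ //
        finrank k U.1 = e₀ ∧ finrank k U.2.1 = e₁ ∧ finrank k U.2.2 = e₂ ∧
        U.1.map f ≤ U.2.1 ∧ U.2.1.map g ≤ U.2.2} ≃
      Σ P : {U : Submodule k V₀ × Submodule k V₂ //
          finrank k U.1 = e₀ ∧ finrank k U.2 = e₂ ∧ U.1.map (g ∘ₗ f) ≤ U.2},
        {U₁ : Submodule k V₁ // finrank k U₁ = e₁ ∧ P.1.1.map f ≤ U₁ ∧ U₁.map g ≤ P.1.2} where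
  toFun U := ⟨⟨(U.1.1, U.1.2.2), U.2.1, U.2.2.2.1,
      (Submodule.map_comp f g _).trans_le
        ((Submodule.map_mono U.2.2.2.2.1).trans U.2.2.2.2.2)⟩,
    ⟨U.1.2.1, U.2.2.1, U.2.2.2.2⟩⟩
  invFun P := ⟨(P.1.1.1, P.2.1, P.1.1.2), P.1.2.1, P.2.2.1, P.1.2.2.1, P.2.2.2⟩
  left_inv _ := rfl
  right_inv _ := rfl

theorem nonempty_chainFiber_equiv_fin [FiniteDimensional k V₁]
    {f : V₀ →ₗ[k] V₁} {g : V₁ →ₗ[k] V₂} (hf : Function.Injective f) (hg : Function.Bijective g)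
    {U₀ : Submodule k V₀} {U₂ : Submodule k V₂} {e₀ e₁ e₂ : ℕ} (hU₀ : finrank k U₀ = e₀)
    (hU₂ : finrank k U₂ = e₂) (hU : U₀.map (g ∘ₗ f) ≤ U₂) (h01 : e₀ ≤ e₁) :
    Nonempty ({U₁ : Submodule k V₁ // finrank k U₁ = e₁ ∧ U₀.map f ≤ U₁ ∧ U₁.map g ≤ U₂} ≃
      {Z : Submodule k (Fin (e₂ - e₀) → k) // finrank k Z = e₁ - e₀}) := by
  have hFW : U₀.map f ≤ U₂.comap g := by
    rwa [← Submodule.map_le_iff_le_comap, ← Submodule.map_comp]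
  have hF : finrank k (U₀.map f) = e₀ := by
    rw [← (U₀.equivMapOfInjective f hf).finrank_eq, hU₀]
  have hW : finrank k (U₂.comap g) = e₂ := by
    rw [((U₂.comap g).equivMapOfInjective g hg.1).finrank_eq,
      Submodule.map_comap_eq_of_surjective hg.2, hU₂]
  obtain ⟨e⟩ := Submodule.nonempty_finrankEqBetween_equiv_fin _ _ hFW hF hW h01
  exact ⟨(Equiv.subtypeEquivRight fun _ =>
    and_congr_right' (and_congr_right' Submodule.map_le_iff_le_comap)).trans e⟩

end

theorem stmt1_general (k : Type*) [Field k]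
    (V₀ V₁ V₂ : Type*)
    [AddCommGroup V₀] [Module k V₀]
    [AddCommGroup V₁] [Module k V₁] [FiniteDimensional k V₁]
    [AddCommGroup V₂] [Module k V₂]
    (f : V₀ →ₗ[k] V₁) (g : V₁ →ₗ[k] V₂)
    (hf : Function.Injective f) (hg : Function.Bijective g)
    (e₀ e₁ e₂ : ℕ) (h01 : e₀ ≤ e₁) :
    Nonempty (
      {U : Submodule k V₀ × Submodule k V₁ × Submodule k V₂ //
          finrank k ↥U.1 = e₀ ∧ finrank k ↥U.2.1 = e₁ ∧ finrank k ↥U.2.2 = e₂ ∧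
          U.1.map f ≤ U.2.1 ∧ U.2.1.map g ≤ U.2.2}
        ≃
      ({U : Submodule k V₀ × Submodule k V₂ //
          finrank k ↥U.1 = e₀ ∧ finrank k ↥U.2 = e₂ ∧ U.1.map (g ∘ₗ f) ≤ U.2}
        × {W : Submodule k (Fin (e₂ - e₀) → k) // finrank k ↥W = e₁ - e₀})) :=
  ⟨(chainEquivSigma f g e₀ e₁ e₂).trans <|
    (Equiv.sigmaCongrRight fun P =>
      (nonempty_chainFiber_equiv_fin hf hg P.2.1 P.2.2.1 P.2.2.2 h01).some).trans
    (Equiv.sigmaEquivProd _ _)⟩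

/-- Reduction of type one (first instance): for an injective map `f : V₀ → V₁`, a
bijective map `g : V₁ → V₂` and `e₀ ≤ e₁ ≤ e₂`, the set of chains of subspaces
`(U₀, U₁, U₂)` of dimensions `(e₀, e₁, e₂)` compatible with `f` and `g` is in
bijection with the product of the set of compatible pairs `(U₀, U₂)` for the
composed map `g ∘ f` with the Grassmannian of `(e₁ − e₀)`-dimensional subspaces
of `k^{e₂ − e₀}`. -/
theorem stmt1 (k : Type*) [Field k]
    (V₀ V₁ V₂ : Type*)
    [AddCommGroup V₀] [Module k V₀] [FiniteDimensional k V₀]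
    [AddCommGroup V₁] [Module k V₁] [FiniteDimensional k V₁]
    [AddCommGroup V₂] [Module k V₂] [FiniteDimensional k V₂]
    (f : V₀ →ₗ[k] V₁) (g : V₁ →ₗ[k] V₂)
    (hf : Function.Injective f) (hg : Function.Bijective g)
    (e₀ e₁ e₂ : ℕ) (h01 : e₀ ≤ e₁) (h12 : e₁ ≤ e₂) :
    Nonempty (
      {U : Submodule k V₀ × Submodule k V₁ × Submodule k V₂ //
          finrank k ↥U.1 = e₀ ∧ finrank k ↥U.2.1 = e₁ ∧ finrank k ↥U.2.2 = e₂ ∧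
          U.1.map f ≤ U.2.1 ∧ U.2.1.map g ≤ U.2.2}
        ≃
      ({U : Submodule k V₀ × Submodule k V₂ //
          finrank k ↥U.1 = e₀ ∧ finrank k ↥U.2 = e₂ ∧ U.1.map (g ∘ₗ f) ≤ U.2}
        × {W : Submodule k (Fin (e₂ - e₀) → k) // finrank k ↥W = e₁ - e₀})) :=
  stmt1_general k V₀ V₁ V₂ f g hf hg e₀ e₁ e₂ h01
end

section
/- Let R be a commutative ring, m ≥ 1, and x₁, …, x_m ∈ R. Then the ordered product of 2×2 matrices ∏_{i=0}^{m−1} [[0, 1], [−x_{m−i}, x_{m−i} + 1]], where the leftmost factor (i = 0) contains x_m and the rightmost factor (i = m−1) contains x₁, equals the matrix [[1 − F_{1,m−1}, F_{1,m−1}], [1 − F_{1,m}, F_{1,m}]], where F_{1,l} = ∑_{i=0}^{l} ∏_{j=1}^{i} xⱼ (with the empty product equal to 1, so F_{1,0} = 1). -/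
/-- For `m ≥ 1`, the ordered product of the 2×2 matrices
`[[0, 1], [−x_{m−i}, x_{m−i} + 1]]` for `i = 0, …, m−1` (leftmost factor `i = 0`,
containing `x_m`) equals `[[1 − F_{1,m−1}, F_{1,m−1}], [1 − F_{1,m}, F_{1,m}]]`
where `F_{1,l} = ∑_{i=0}^{l} ∏_{j=1}^{i} xⱼ`. -/
theorem stmt6 {R : Type*} [CommRing R] (m : ℕ) (hm : 1 ≤ m) (x : ℕ → R) :
    ((List.range m).map (fun i => !![(0 : R), 1; -(x (m - i)), x (m - i) + 1])).prod =
      !![1 - ∑ i ∈ Finset.range (m - 1 + 1), ∏ j ∈ Finset.Icc 1 i, x j,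
         ∑ i ∈ Finset.range (m - 1 + 1), ∏ j ∈ Finset.Icc 1 i, x j;
         1 - ∑ i ∈ Finset.range (m + 1), ∏ j ∈ Finset.Icc 1 i, x j,
         ∑ i ∈ Finset.range (m + 1), ∏ j ∈ Finset.Icc 1 i, x j] := by
  induction m, hm using Nat.le_induction with
  | base =>
    simp only [List.range_succ, List.range_zero, List.map_cons, List.map_nil, List.prod_cons, List.prod_nil,
      mul_one, Finset.sum_range_succ, Finset.sum_range_zero, Nat.sub_self, Nat.sub_zero,
      zero_add]
    norm_num [Finset.Icc_self, Finset.Icc_eq_empty_of_lt, add_comm]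
  | succ n hn ih =>
    rw [List.range_succ_eq_map, List.map_cons, List.prod_cons, List.map_map]
    have hmap : ((fun i => !![(0 : R), 1; -x (n + 1 - i), x (n + 1 - i) + 1]) ∘ Nat.succ)
        = fun i => !![(0 : R), 1; -x (n - i), x (n - i) + 1] := by
      funext i
      simp [Function.comp, show n + 1 - (i + 1) = n - i from by omega]
    rw [hmap, ih]
    simp only [Nat.sub_zero, Nat.add_sub_cancel]
    have hsub : n - 1 + 1 = n := Nat.sub_add_cancel hn
    rw [hsub]
    have e1 : (∑ i ∈ Finset.range (n + 1), ∏ j ∈ Finset.Icc 1 i, x j)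
        = (∑ i ∈ Finset.range n, ∏ j ∈ Finset.Icc 1 i, x j)
          + ∏ j ∈ Finset.Icc 1 n, x j := Finset.sum_range_succ _ _
    have e2 : (∑ i ∈ Finset.range (n + 1 + 1), ∏ j ∈ Finset.Icc 1 i, x j)
        = (∑ i ∈ Finset.range (n + 1), ∏ j ∈ Finset.Icc 1 i, x j)
          + ∏ j ∈ Finset.Icc 1 (n + 1), x j := Finset.sum_range_succ _ _
    have e3 : (∏ j ∈ Finset.Icc 1 (n + 1), x j)
        = (∏ j ∈ Finset.Icc 1 n, x j) * x (n + 1) :=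
      Finset.prod_Icc_succ_top (Nat.le_add_left 1 n) _
    rw [Matrix.mul_fin_two, e2, e3, e1]
    congr 1 <;> ring
end

section
/- For all natural numbers m, t, n with m ≤ t ≤ n, the following identity of integers holds: ∑_{r=0}^{m} (−1)^r · C(m, r) · C(n − m + r, n − t) = (−1)^m · C(n − m, t), where C(·,·) denotes the ordinary binomial coefficient (with C(a, b) = 0 whenever b > a). -/
/-!
The alternating sum is, up to the sign `(-1)^m`, the `m`-th forward difference of
`x ↦ C(x, n - t)` at `x = n - m`. Since `Δ C(x, j + 1) = C(x, j)`, this difference is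
`C(n - m, n - t - m) = C(n - m, t)` when `m ≤ n - t`, and it vanishes otherwise, as then
`m` exceeds the degree `n - t`; in that case also `n - m < t`.
-/

open Finset fwdDiff

theorem sum_range_neg_one_pow_mul_choose_mul_eq_fwdDiff_iter (f : ℕ → ℤ) (m N : ℕ) :
    ∑ r ∈ range (m + 1), (-1 : ℤ) ^ r * m.choose r * f (N + r) =
      (-1 : ℤ) ^ m * (Δ_[1] ^[m] f) N := by
  rw [fwdDiff_iter_eq_sum_shift, mul_sum]
  refine sum_congr rfl fun r hr => ?_
  have hsign : (-1 : ℤ) ^ m * (-1) ^ (m - r) = (-1) ^ r := by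
    have hr : r ≤ m := mem_range_succ_iff.mp hr
    rw [← pow_add, show m + (m - r) = r + 2 * (m - r) by omega, pow_add, pow_mul]
    simp
  rw [smul_eq_mul, nsmul_one, Nat.cast_id, ← hsign]
  ring

theorem fwdDiff_iter_choose_eq_zero_of_lt {k m : ℕ} (h : k < m) :
    Δ_[1] ^[m] (fun x ↦ x.choose k : ℕ → ℤ) = 0 := by
  obtain ⟨d, rfl⟩ := Nat.exists_eq_add_of_lt h
  have hconst : Δ_[1] ^[k] (fun x ↦ x.choose k : ℕ → ℤ) = fun _ ↦ 1 := by
    simpa using fwdDiff_iter_choose 0 k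
  rw [show k + d + 1 = d + 1 + k by ring, Function.iterate_add_apply, hconst,
    Function.iterate_succ_apply, fwdDiff_const]
  exact Function.iterate_fixed (by simp) d

/-- Alternating-sum binomial identity (Lemma 4.3(1)): for `m ≤ t ≤ n`,
`∑_{r=0}^{m} (−1)^r C(m,r) C(n−m+r, n−t) = (−1)^m C(n−m, t)`. -/
theorem stmt7 (m t n : ℕ) (hmt : m ≤ t) (htn : t ≤ n) :
    ∑ r ∈ Finset.range (m + 1),
        (-1 : ℤ) ^ r * (m.choose r : ℤ) * ((n - m + r).choose (n - t) : ℤ) =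
      (-1 : ℤ) ^ m * ((n - m).choose t : ℤ) := by
  rw [sum_range_neg_one_pow_mul_choose_mul_eq_fwdDiff_iter (fun x ↦ (x.choose (n - t) : ℤ))]
  congr 1
  rcases le_or_gt m (n - t) with h | h
  · obtain ⟨j, hj⟩ := Nat.exists_eq_add_of_le h
    rw [hj, fwdDiff_iter_choose]
    beta_reduce
    rw [Nat.choose_symm_of_eq_add (by omega : n - m = j + t)]
  · rw [fwdDiff_iter_choose_eq_zero_of_lt h, Nat.choose_eq_zero_of_lt (by omega : n - m < t)]
    simp
end

section
/- For all natural numbers m, t, n with m ≤ n < t, the following identity of rational numbers holds: ∑_{r=0}^{m} (−1)^r · C(m, r) · (n − m + r)! / (t − m + r)! = (n − m)! · (t − n + m − 1)! / ( t! · (t − n − 1)! ), where C(·,·) denotes the ordinary binomial coefficient. -/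
/-!
With `a = n - m` and `e = t - n - 1` the sum is `(-1)^m` times the `m`-th forward difference of
`x ↦ x! / (x + e + 1)!` at `a`. Since `Δ (x! / (x + N)!) = -N * x! / (x + N + 1)!`, the `m`-th
difference is `(-1)^m (e + 1) ⋯ (e + m) * x! / (x + e + m + 1)!`.
-/

open Finset fwdDiff Nat

theorem fwdDiff_iter_factorial_div_factorial (e m a : ℕ) :
    (Δ_[1])^[m] (fun x : ℕ ↦ (x ! : ℚ) / (x + e + 1)!) a =
      (-1) ^ m * a ! * (e + m)! / ((a + e + 1 + m)! * e !) := by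
  induction m generalizing a with
  | zero =>
    simp only [Function.iterate_zero, id_eq, pow_zero, one_mul, add_zero]
    field_simp
  | succ m ih =>
    rw [Function.iterate_succ_apply', fwdDiff, ih, ih,
      show a + 1 + e + 1 + m = a + e + 1 + m + 1 by omega, show e + (m + 1) = e + m + 1 by omega,
      show a + e + 1 + (m + 1) = a + e + 1 + m + 1 by omega]
    push_cast [factorial_succ]
    field_simp
    ring

theorem sum_alternating_choose_mul_factorial_div_factorial (e m a : ℕ) :
    ∑ r ∈ range (m + 1), (-1 : ℚ) ^ r * m.choose r * (a + r)! / (a + e + 1 + r)! =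
      a ! * (e + m)! / ((a + e + 1 + m)! * e !) := by
  have h := fwdDiff_iter_factorial_div_factorial e m a
  rw [fwdDiff_iter_eq_sum_shift] at h
  have hsign : ∀ r ∈ range (m + 1), (-1 : ℚ) ^ r = (-1) ^ m * (-1) ^ (m - r) := by
    intro r hr
    rw [← pow_add, show m + (m - r) = r + 2 * (m - r) by grind, pow_add, pow_mul]
    simp
  calc _ = (-1) ^ m * ∑ k ∈ range (m + 1),
        ((-1 : ℤ) ^ (m - k) * m.choose k) • ((a + k • 1)! / (a + k • 1 + e + 1)! : ℚ) := by
        rw [mul_sum]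
        refine sum_congr rfl fun r hr ↦ ?_
        rw [hsign r hr]
        simp only [Int.reduceNeg, smul_eq_mul, mul_one, zsmul_eq_mul, Int.cast_mul, Int.cast_pow,
          Int.cast_neg, Int.cast_one, Int.cast_natCast]
        rw [show a + r + e + 1 = a + e + 1 + r by omega]
        ring
    _ = _ := by
        rw [h, mul_assoc, mul_div_assoc, mul_div_assoc, ← mul_assoc, ← pow_add,
          Even.neg_one_pow ⟨m, rfl⟩, one_mul]

/-- Alternating-sum factorial identity (Lemma 4.3(2)): for `m ≤ n < t`,
`∑_{r=0}^{m} (−1)^r C(m,r) (n−m+r)!/(t−m+r)! = (n−m)!(t−n+m−1)!/(t!(t−n−1)!)`. -/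
theorem stmt8 (m t n : ℕ) (hmn : m ≤ n) (hnt : n < t) :
    ∑ r ∈ Finset.range (m + 1),
        (-1 : ℚ) ^ r * (m.choose r : ℚ) * ((n - m + r).factorial : ℚ)
          / ((t - m + r).factorial : ℚ) =
      ((n - m).factorial : ℚ) * ((t - n + m - 1).factorial : ℚ)
        / ((t.factorial : ℚ) * ((t - n - 1).factorial : ℚ)) := by
  have key := sum_alternating_choose_mul_factorial_div_factorial (t - n - 1) m (n - m)
  rw [show t - n - 1 + m = t - n + m - 1 by omega,
    show n - m + (t - n - 1) + 1 + m = t by omega] at key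
  rw [← key]
  refine sum_congr rfl fun r _ ↦ ?_
  rw [show n - m + (t - n - 1) + 1 + r = t - m + r by omega]
end
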